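/- arXiv:2509.05064 — 5 statements merged into one kernel-verified Lean document; each statement's English description precedes it below -/
import Mathlib

section
/- Let r, m, ℓ₁, ℓ₂, k be natural numbers with 2^r ≤ k < 2^{r+1}, ℓ₁ < 2^{r+1}, ℓ₂ < 2^{r+1}, and ℓ₁ + ℓ₂ < k. Then the bitwise XOR of (2^{r+1}·m + ℓ₁) and (2^{r+1}·m + ℓ₂) is strictly less than k; in particular the nim-sum (2^{r+1}·m + ℓ₁) XOR (2^{r+1}·m + ℓ₂) XOR k is nonzero. -/
/-- XOR is addition without carries. -/
theorem Nat.xor_le_add (a b : ℕ) : a ^^^ b ≤ a + b := by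
  induction a using Nat.strong_induction_on generalizing b with
  | _ a ih =>
    rcases Nat.eq_zero_or_pos a with rfl | ha
    · simp
    have hhigh : a / 2 ^^^ b / 2 ≤ a / 2 + b / 2 :=
      ih (a / 2) (Nat.div_lt_self ha Nat.one_lt_two) _
    have hdiv : (a ^^^ b) / 2 = a / 2 ^^^ b / 2 := Nat.xor_div_two
    have hmod : (a ^^^ b) % 2 = (a + b) % 2 := Nat.xor_mod_two_eq
    omega

theorem Nat.two_pow_mul_add_xor_two_pow_mul_add {n m a b : ℕ} (ha : a < 2 ^ n)
    (hb : b < 2 ^ n) : (2 ^ n * m + a) ^^^ (2 ^ n * m + b) = a ^^^ b := by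
  have hpos : 0 < 2 ^ n := Nat.two_pow_pos n
  have hdiv : ((2 ^ n * m + a) ^^^ (2 ^ n * m + b)) / 2 ^ n = 0 := by
    rw [Nat.xor_div_two_pow, Nat.mul_add_div hpos, Nat.mul_add_div hpos,
      Nat.div_eq_of_lt ha, Nat.div_eq_of_lt hb, Nat.xor_self]
  have hmod : ((2 ^ n * m + a) ^^^ (2 ^ n * m + b)) % 2 ^ n = a ^^^ b := by
    rw [Nat.xor_mod_two_pow, Nat.mul_add_mod, Nat.mul_add_mod, Nat.mod_eq_of_lt ha,
      Nat.mod_eq_of_lt hb]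
  rw [← Nat.div_add_mod ((2 ^ n * m + a) ^^^ (2 ^ n * m + b)) (2 ^ n), hdiv, hmod,
    Nat.mul_zero, Nat.zero_add]

theorem xor_lt_of_sum_lt_general (r m ℓ₁ ℓ₂ k : ℕ)
    (h3 : ℓ₁ < 2 ^ (r + 1)) (h4 : ℓ₂ < 2 ^ (r + 1)) (h5 : ℓ₁ + ℓ₂ < k) :
    (2 ^ (r + 1) * m + ℓ₁) ^^^ (2 ^ (r + 1) * m + ℓ₂) < k ∧
      (2 ^ (r + 1) * m + ℓ₁) ^^^ (2 ^ (r + 1) * m + ℓ₂) ^^^ k ≠ 0 := by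
  have hlt : (2 ^ (r + 1) * m + ℓ₁) ^^^ (2 ^ (r + 1) * m + ℓ₂) < k := by
    rw [Nat.two_pow_mul_add_xor_two_pow_mul_add h3 h4]
    exact (Nat.xor_le_add ℓ₁ ℓ₂).trans_lt h5
  exact ⟨hlt, Nat.xor_ne_zero_iff.mpr hlt.ne⟩

/-- If `2^r ≤ k < 2^(r+1)`, `ℓ₁, ℓ₂ < 2^(r+1)` and `ℓ₁ + ℓ₂ < k`, then the XOR of
`2^(r+1)·m + ℓ₁` and `2^(r+1)·m + ℓ₂` is less than `k`; in particular the nim-sum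
of the three numbers is nonzero. -/
theorem xor_lt_of_sum_lt (r m ℓ₁ ℓ₂ k : ℕ)
    (h1 : 2 ^ r ≤ k) (h2 : k < 2 ^ (r + 1))
    (h3 : ℓ₁ < 2 ^ (r + 1)) (h4 : ℓ₂ < 2 ^ (r + 1)) (h5 : ℓ₁ + ℓ₂ < k) :
    (2 ^ (r + 1) * m + ℓ₁) ^^^ (2 ^ (r + 1) * m + ℓ₂) < k ∧
      (2 ^ (r + 1) * m + ℓ₁) ^^^ (2 ^ (r + 1) * m + ℓ₂) ^^^ k ≠ 0 :=
  xor_lt_of_sum_lt_general r m ℓ₁ ℓ₂ k h3 h4 h5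
end

section
/- Let a ≤ b ≤ c be positive integers, not all equal. Then the multiset {a, b, c} is special if and only if 2a > (b + c − 2a)(b + c − 2a + 1). Here {a,b,c} is called special if there exist positive integers k, m, i and a natural number ℓ with 1 ≤ i ≤ m+1 and m(m+1)/2 ≤ k ≤ m(m+3)/2 such that {a,b,c} equals the multiset {k+1+(m+1)ℓ, k+i+(m+1)ℓ, k+m+2−i+(m+1)ℓ}. -/
/-- A multiset of three positive integers is special if it equals
`{k+1+(m+1)ℓ, k+i+(m+1)ℓ, k+m+2−i+(m+1)ℓ}` for positive integers `k, m, i` and a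
natural number `ℓ` with `1 ≤ i ≤ m+1` and `m(m+1)/2 ≤ k ≤ m(m+3)/2`. -/
def Special (S : Multiset ℕ) : Prop :=
  ∃ k m i ℓ : ℕ, 0 < k ∧ 0 < m ∧ 0 < i ∧ i ≤ m + 1 ∧
    m * (m + 1) / 2 ≤ k ∧ k ≤ m * (m + 3) / 2 ∧
    S = {k + 1 + (m + 1) * ℓ, k + i + (m + 1) * ℓ, k + m + 2 - i + (m + 1) * ℓ}

lemma special_aux (a m : ℕ) (hm : 0 < m) (ha : m * (m + 1) < 2 * a) :
    ∃ k ℓ, 0 < k ∧ m * (m + 1) / 2 ≤ k ∧ k ≤ m * (m + 3) / 2 ∧ k + 1 + (m + 1) * ℓ = a := by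
  have e1 : m * (m + 1) / 2 * 2 = m * (m + 1) :=
    Nat.div_mul_cancel (Nat.even_mul_succ_self m).two_dvd
  have he : Even (m * (m + 3)) := by
    have h3 : m * (m + 3) = m * (m + 1) + 2 * m := by ring
    rw [h3]; exact (Nat.even_mul_succ_self m).add (even_two_mul m)
  have e2 : m * (m + 3) / 2 * 2 = m * (m + 3) := Nat.div_mul_cancel he.two_dvd
  have e3 : m * (m + 3) = m * (m + 1) + 2 * m := by ring
  have hM2 : 1 * 2 ≤ m * (m + 1) := Nat.mul_le_mul hm (by omega)
  obtain ⟨q, hq⟩ : ∃ q, m * (m + 1) / 2 = q := ⟨_, rfl⟩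
  obtain ⟨p, hp⟩ : ∃ p, m * (m + 3) / 2 = p := ⟨_, rfl⟩
  obtain ⟨M, hM⟩ : ∃ M, m * (m + 1) = M := ⟨_, rfl⟩
  rw [hq, hM] at e1
  rw [hM] at ha hM2
  rw [hp] at e2
  rw [hM] at e3
  rw [e3] at e2
  set t := a - 1 - q with ht
  obtain ⟨d, r, hr, hdr⟩ : ∃ d r, r < m + 1 ∧ (m + 1) * d + r = t :=
    ⟨t / (m + 1), t % (m + 1), Nat.mod_lt _ (by omega),
      Nat.div_add_mod t (m + 1)⟩
  refine ⟨q + r, d, ?_, ?_, ?_, ?_⟩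
  · omega
  · rw [hq]; omega
  · rw [hp]; omega
  · obtain ⟨P, hP⟩ : ∃ P, (m + 1) * d = P := ⟨_, rfl⟩
    rw [hP] at hdr ⊢
    omega

/-- For `0 < a ≤ b ≤ c` not all equal, `{a, b, c}` is special iff
`2a > (b + c − 2a)(b + c − 2a + 1)`. -/
theorem special_iff (a b c : ℕ) (ha : 0 < a) (hab : a ≤ b) (hbc : b ≤ c)
    (hne : ¬(a = b ∧ b = c)) :
    Special {a, b, c} ↔
      2 * a > (b + c - 2 * a) * (b + c - 2 * a + 1) := by
  have hlt : 2 * a < b + c := by omega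
  constructor
  · rintro ⟨k, m, i, ℓ, hk, hm, hi1, hi2, hk1, hk2, hS⟩
    have e1 : m * (m + 1) / 2 * 2 = m * (m + 1) :=
      Nat.div_mul_cancel (Nat.even_mul_succ_self m).two_dvd
    have h1 : a ∈ ({k + 1 + (m + 1) * ℓ, k + i + (m + 1) * ℓ,
        k + m + 2 - i + (m + 1) * ℓ} : Multiset ℕ) := by
      rw [← hS]; simp
    have h2 : k + 1 + (m + 1) * ℓ ∈ ({a, b, c} : Multiset ℕ) := by
      rw [hS]; simp
    have hsum : a + (b + c) = k + 1 + (m + 1) * ℓ +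
        (k + i + (m + 1) * ℓ + (k + m + 2 - i + (m + 1) * ℓ)) := by
      have := congrArg Multiset.sum hS
      simpa using this
    simp only [Multiset.insert_eq_cons, Multiset.mem_cons, Multiset.mem_singleton] at h1 h2
    obtain ⟨P, hP⟩ : ∃ P, (m + 1) * ℓ = P := ⟨_, rfl⟩
    rw [hP] at h1 h2 hsum
    obtain ⟨q, hq⟩ : ∃ q, m * (m + 1) / 2 = q := ⟨_, rfl⟩
    obtain ⟨M, hM⟩ : ∃ M, m * (m + 1) = M := ⟨_, rfl⟩
    rw [hq, hM] at e1
    rw [hq] at hk1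
    have hax : a = k + 1 + P := by omega
    have hm' : b + c - 2 * a = m := by omega
    rw [hm', hM]
    omega
  · intro hgt
    have hm1 : 0 < b + c - 2 * a := by omega
    obtain ⟨k, ℓ, hk, hk1, hk2, hka⟩ := special_aux a (b + c - 2 * a) hm1 hgt
    refine ⟨k, b + c - 2 * a, b - a + 1, ℓ, hk, hm1, by omega, by omega, hk1, hk2, ?_⟩
    obtain ⟨P, hP⟩ : ∃ P, (b + c - 2 * a + 1) * ℓ = P := ⟨_, rfl⟩
    rw [hP] at hka ⊢
    have h1 : k + 1 + P = a := hka
    have h2 : k + (b - a + 1) + P = b := by omega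
    have h3 : k + (b + c - 2 * a) + 2 - (b - a + 1) + P = c := by omega
    rw [h1, h2, h3]
end

section
/- In the Game of Graph Nim played on a triangle (vertices A, B, C with edges AB, BC, CA), a configuration of positive edge weights is a losing position for the player to move if and only if all three edge weights are equal. -/
namespace GraphNim

variable {V E : Type} [Fintype E]

/-- A legal move in the Game of Graph Nim: choose a vertex `v` and weakly decrease
the weights of edges incident to `v` (all other edges unchanged), strictly
decreasing the total weight. -/
def Move (inc : V → E → Prop) (w w' : E → ℕ) : Prop :=
  ∃ v : V, (∀ e, w' e ≤ w e) ∧ (∀ e, ¬ inc v e → w' e = w e) ∧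
    (∑ e, w' e) < (∑ e, w e)

/-- A configuration is losing for the player to move: every legal move leads to a
non-losing configuration (the all-zero configuration is vacuously losing). -/
def Losing (inc : V → E → Prop) (w : E → ℕ) : Prop :=
  ∀ w', Move inc w w' → ¬ Losing inc w'
termination_by ∑ e, w e
decreasing_by
  rename_i h
  obtain ⟨v, _, _, h3⟩ := h
  exact h3

/-- A configuration is winning for the player to move: some legal move leads to a
losing configuration. -/
def Winning (inc : V → E → Prop) (w : E → ℕ) : Prop :=
  ∃ w', Move inc w w' ∧ Losing inc w'

end GraphNim

open GraphNim

/-- Triangle with vertices `A = 0, B = 1, C = 2` and edges `AB = 0, BC = 1, CA = 2`: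
edge `e` joins vertices `e` and `e + 1`. -/
def triInc (v e : Fin 3) : Prop := v = e ∨ v = e + 1


instance (v e : Fin 3) : Decidable (triInc v e) := by
  unfold triInc; infer_instance

lemma triInc_not (v e : Fin 3) (h : ¬ triInc v e) : e = v + 1 := by
  revert h; revert v e; decide

lemma not_triInc_succ : ∀ v : Fin 3, ¬ triInc v (v + 1) := by decide

lemma tri_aux : ∀ n (w : Fin 3 → ℕ), (∑ e, w e) = n →
    (Losing triInc w ↔ (w 0 = w 1 ∧ w 1 = w 2)) := by
  intro n
  induction n using Nat.strong_induction_on with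
  | _ n ih =>
  intro w hn
  rw [Losing]
  constructor
  · intro hL
    by_contra hne
    set m := min (w 0) (min (w 1) (w 2)) with hm
    have hex : ∃ v : Fin 3, w (v + 1) = m := by
      have hmin : w 0 = m ∨ w 1 = m ∨ w 2 = m := by omega
      rcases hmin with h | h | h
      exacts [⟨2, h⟩, ⟨0, h⟩, ⟨1, h⟩]
    obtain ⟨v, hv⟩ := hex
    have hmove : Move triInc w (fun _ => m) := by
      refine ⟨v, ?_, ?_, ?_⟩
      · intro e
        fin_cases e
        · show m ≤ w 0; omega
        · show m ≤ w 1; omega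
        · show m ≤ w 2; omega
      · intro e he
        rw [triInc_not v e he]; exact hv.symm
      · simp only [Fin.sum_univ_three]; omega
    have hL' : Losing triInc (fun _ => m) := by
      refine (ih _ ?_ _ rfl).mpr ⟨rfl, rfl⟩
      rw [← hn]
      simp only [Fin.sum_univ_three]; omega
    exact hL _ hmove hL'
  · rintro ⟨h01, h12⟩ w' hmv hL'
    obtain ⟨v, hle, heq, hlt⟩ := hmv
    have hsum' : ∑ e, w' e < n := hn ▸ hlt
    obtain ⟨k01, k12⟩ := (ih _ hsum' w' rfl).mp hL'
    simp only [Fin.sum_univ_three] at hlt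
    have hfix : w' (v + 1) = w (v + 1) := heq _ (not_triInc_succ v)
    fin_cases v
    · have : w' 1 = w 1 := hfix
      omega
    · have : w' 2 = w 2 := hfix
      omega
    · have : w' 0 = w 0 := hfix
      omega

/-- On a triangle, a configuration of positive edge weights is losing iff all three
edge weights are equal. -/
theorem triangle_losing_iff (w : Fin 3 → ℕ)
    (h0 : 0 < w 0) (h1 : 0 < w 1) (h2 : 0 < w 2) :
    Losing triInc w ↔ (w 0 = w 1 ∧ w 1 = w 2) := by
  exact tri_aux _ w rfl
end

section
/- In the Game of Graph Nim played on the 4-cycle with vertices A, B, C, D and edges AB, BC, CD, DA, a configuration of positive edge weights is a losing position if and only if w(AB) = w(CD) and w(BC) = w(DA). -/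
open GraphNim

/-- The 4-cycle with vertices `A = 0, B = 1, C = 2, D = 3` and edges
`AB = 0, BC = 1, CD = 2, DA = 3`: edge `e` joins vertices `e` and `e + 1`. -/
def cycInc (v e : Fin 4) : Prop := v = e ∨ v = e + 1

lemma losing_iff {V E : Type} [Fintype E] (inc : V → E → Prop) (w : E → ℕ) :
    Losing inc w ↔ ∀ w', Move inc w w' → ¬ Losing inc w' := by rw [Losing]

lemma cyc1 : ∀ v e : Fin 4, ¬ cycInc (v + 2) e → ¬ cycInc v (e + 2) := by
  unfold cycInc; decide

lemma cyc2 : ∀ v e : Fin 4, cycInc v e → ¬ cycInc v (e + 2) := by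
  unfold cycInc; decide

lemma sym_ext {w : Fin 4 → ℕ} (h02 : w 0 = w 2) (h13 : w 1 = w 3) :
    ∀ e, w (e + 2) = w e := by
  intro e; fin_cases e <;> simp_all

lemma sym_losing : ∀ n (w : Fin 4 → ℕ), ∑ e, w e ≤ n → w 0 = w 2 → w 1 = w 3 →
    Losing cycInc w := by
  intro n
  induction n with
  | zero =>
    intro w hsum _ _
    rw [losing_iff]
    rintro w' ⟨v, _, _, hlt⟩ _
    omega
  | succ n ih =>
    intro w hsum h02 h13
    rw [losing_iff]
    rintro w' ⟨v, hle, hfix, hlt⟩ hL'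
    set w'' : Fin 4 → ℕ := fun e => min (w' e) (w' (e + 2)) with hw''
    have hle'' : ∀ e, w'' e ≤ w' e := fun e => min_le_left _ _
    have hsym : ∀ e, w (e + 2) = w e := sym_ext h02 h13
    -- fixed edges for the mirror move at v + 2
    have hfix'' : ∀ e, ¬ cycInc (v + 2) e → w'' e = w' e := by
      intro e he
      have h1 : w' (e + 2) = w (e + 2) := hfix _ (cyc1 v e he)
      have : w' e ≤ w' (e + 2) := by rw [h1, hsym]; exact hle e
      simpa [hw''] using min_eq_left this
    -- strictness: w' is not symmetric
    have hstrict : ∃ e, w' (e + 2) < w' e := by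
      by_contra hc
      push_neg at hc
      have heq : ∀ e, w' e = w e := by
        intro e
        by_cases hi : cycInc v e
        · have h1 : w' (e + 2) = w (e + 2) := hfix _ (cyc2 v e hi)
          have h2 := hc e
          have h3 := hc (e + 2)
          have h4 : e + 2 + 2 = e := by fin_cases e <;> rfl
          rw [h4] at h3
          rw [hsym] at h1
          omega
        · exact hfix e hi
      have : ∑ e, w' e = ∑ e, w e := Finset.sum_congr rfl fun e _ => heq e
      omega
    obtain ⟨e0, he0⟩ := hstrict
    have hlt'' : ∑ e, w'' e < ∑ e, w' e := by
      apply Finset.sum_lt_sum (fun e _ => hle'' e)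
      exact ⟨e0, Finset.mem_univ _, by simp [hw'']; omega⟩
    have hmove : Move cycInc w' w'' := ⟨v + 2, hle'', hfix'', hlt''⟩
    have h02'' : w'' 0 = w'' 2 := by simp [hw'', min_comm]
    have h13'' : w'' 1 = w'' 3 := by simp [hw'', min_comm]
    have hsum'' : ∑ e, w'' e ≤ n := by omega
    exact (losing_iff _ _).mp hL' w'' hmove (ih w'' hsum'' h02'' h13'')

/-- On the 4-cycle, a configuration of positive edge weights is losing iff
`w(AB) = w(CD)` and `w(BC) = w(DA)`. -/
theorem cycle4_losing_iff (w : Fin 4 → ℕ) (hpos : ∀ e, 0 < w e) :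
    Losing cycInc w ↔ (w 0 = w 2 ∧ w 1 = w 3) := by
  constructor
  · intro hL
    by_contra hc
    set w'' : Fin 4 → ℕ := fun e => min (w e) (w (e + 2)) with hw''
    have hle : ∀ e, w'' e ≤ w e := fun e => min_le_left _ _
    have h02'' : w'' 0 = w'' 2 := by simp [hw'', min_comm]
    have h13'' : w'' 1 = w'' 3 := by simp [hw'', min_comm]
    have hlt : ∑ e, w'' e < ∑ e, w e := by
      apply Finset.sum_lt_sum (fun e _ => hle e)
      rcases (not_and_or.mp hc) with h | h
      · rcases Nat.lt_or_ge (w 0) (w 2) with h' | h'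
        · exact ⟨2, Finset.mem_univ _, by simp [hw'']; omega⟩
        · exact ⟨0, Finset.mem_univ _, by simp [hw'']; omega⟩
      · rcases Nat.lt_or_ge (w 1) (w 3) with h' | h'
        · exact ⟨3, Finset.mem_univ _, by simp [hw'']; omega⟩
        · exact ⟨1, Finset.mem_univ _, by simp [hw'']; omega⟩
    have hmove : Move cycInc w w'' := by
      rcases le_total (w 2) (w 0) with h1 | h1 <;> rcases le_total (w 1) (w 3) with h2 | h2
      · refine ⟨0, hle, ?_, hlt⟩
        intro e he
        fin_cases e <;> simp [hw'', cycInc] at he ⊢ <;> omega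
      · refine ⟨1, hle, ?_, hlt⟩
        intro e he
        fin_cases e <;> simp [hw'', cycInc] at he ⊢ <;> omega
      · refine ⟨3, hle, ?_, hlt⟩
        intro e he
        fin_cases e <;> simp [hw'', cycInc] at he ⊢ <;> omega
      · refine ⟨2, hle, ?_, hlt⟩
        intro e he
        fin_cases e <;> simp [hw'', cycInc] at he ⊢ <;> omega
    exact (losing_iff _ _).mp hL w'' hmove
      (sym_losing (∑ e, w'' e) w'' le_rfl h02'' h13'')
  · rintro ⟨h02, h13⟩
    exact sym_losing (∑ e, w e) w le_rfl h02 h13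
end

section
/- In the Game of Graph Nim on the path graph with vertices A, B, C, D, E and edges AB, BC, CD, DE, every configuration in which all four edge weights are strictly positive is a winning position for the first player. -/
open GraphNim

/-- The path `A–B–C–D–E` with vertices `Fin 5` and edges `AB = 0, BC = 1, CD = 2,
DE = 3`: edge `e` joins vertices `e` and `e + 1`. -/
def pathInc (v : Fin 5) (e : Fin 4) : Prop := v = e.castSucc ∨ v = e.succ

/-- The set of losing positions: `(a, b, 0, a+b)` or `(c+d, 0, c, d)`. -/
def Lset (w : Fin 4 → ℕ) : Prop :=
  (w 2 = 0 ∧ w 3 = w 0 + w 1) ∨ (w 1 = 0 ∧ w 0 = w 2 + w 3)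

lemma lset_move (w w' : Fin 4 → ℕ) (hw : Lset w) (hm : Move pathInc w w') :
    ¬ Lset w' := by
  obtain ⟨v, h1, h2, h3⟩ := hm
  intro hw'
  rw [Fin.sum_univ_four, Fin.sum_univ_four] at h3
  have i0 := h1 0; have i1 := h1 1; have i2 := h1 2; have i3 := h1 3
  unfold Lset at hw hw'
  fin_cases v
  · have f1 := h2 1 (by unfold pathInc; decide); have f2 := h2 2 (by unfold pathInc; decide)
    have f3 := h2 3 (by unfold pathInc; decide); omega
  · have f2 := h2 2 (by unfold pathInc; decide); have f3 := h2 3 (by unfold pathInc; decide); omega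
  · have f0 := h2 0 (by unfold pathInc; decide); have f3 := h2 3 (by unfold pathInc; decide); omega
  · have f0 := h2 0 (by unfold pathInc; decide); have f1 := h2 1 (by unfold pathInc; decide); omega
  · have f0 := h2 0 (by unfold pathInc; decide); have f1 := h2 1 (by unfold pathInc; decide)
    have f2 := h2 2 (by unfold pathInc; decide); omega

lemma exists_move_to_lset (w : Fin 4 → ℕ) (hw : ¬ Lset w) :
    ∃ w', Move pathInc w w' ∧ Lset w' := by
  unfold Lset at hw
  rcases le_or_gt (w 0) (w 3) with h | h
  · rcases le_or_gt (w 3) (w 0 + w 1) with h' | h'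
    · refine ⟨![w 0, w 3 - w 0, 0, w 3], ⟨2, ?_, ?_, ?_⟩, ?_⟩
      · intro e; fin_cases e <;> simp <;> omega
      · intro e he; fin_cases e
        · simp
        · exact absurd (by unfold pathInc; decide) he
        · exact absurd (by unfold pathInc; decide) he
        · simp
      · rw [Fin.sum_univ_four, Fin.sum_univ_four]; simp; omega
      · unfold Lset; simp; omega
    · refine ⟨![w 0, w 1, 0, w 0 + w 1], ⟨3, ?_, ?_, ?_⟩, ?_⟩
      · intro e; fin_cases e <;> simp <;> omega
      · intro e he; fin_cases e
        · simp
        · simp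
        · exact absurd (by unfold pathInc; decide) he
        · exact absurd (by unfold pathInc; decide) he
      · rw [Fin.sum_univ_four, Fin.sum_univ_four]; simp; omega
      · unfold Lset; simp
  · rcases le_or_gt (w 0) (w 2 + w 3) with h' | h'
    · refine ⟨![w 0, 0, w 0 - w 3, w 3], ⟨2, ?_, ?_, ?_⟩, ?_⟩
      · intro e; fin_cases e <;> simp <;> omega
      · intro e he; fin_cases e
        · simp
        · exact absurd (by unfold pathInc; decide) he
        · exact absurd (by unfold pathInc; decide) he
        · simp
      · rw [Fin.sum_univ_four, Fin.sum_univ_four]; simp; omega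
      · unfold Lset; simp; omega
    · refine ⟨![w 2 + w 3, 0, w 2, w 3], ⟨1, ?_, ?_, ?_⟩, ?_⟩
      · intro e; fin_cases e <;> simp <;> omega
      · intro e he; fin_cases e
        · exact absurd (by unfold pathInc; decide) he
        · exact absurd (by unfold pathInc; decide) he
        · simp
        · simp
      · rw [Fin.sum_univ_four, Fin.sum_univ_four]; simp; omega
      · unfold Lset; simp

lemma lset_losing : ∀ n (w : Fin 4 → ℕ), (∑ e, w e) = n → Lset w →
    Losing pathInc w := by
  intro n
  induction n using Nat.strong_induction_on with
  | _ n ih =>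
    intro w hn hw
    rw [Losing]
    intro w' hm hL'
    have hnot := lset_move w w' hw hm
    obtain ⟨w'', hm'', hw''⟩ := exists_move_to_lset w' hnot
    have hs1 : (∑ e, w' e) < n := by
      obtain ⟨v, _, _, h3⟩ := hm; omega
    have hs2 : (∑ e, w'' e) < n := by
      obtain ⟨v, _, _, h3⟩ := hm''; omega
    rw [Losing] at hL'
    exact hL' w'' hm'' (ih _ hs2 w'' rfl hw'')

/-- On the path `A–B–C–D–E`, every configuration with all four edge weights
positive is winning for the first player. -/
theorem path5_winning (w : Fin 4 → ℕ) (hpos : ∀ e, 0 < w e) :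
    Winning pathInc w := by
  have hns : ¬ Lset w := by
    intro h
    have h1 := hpos 1; have h2 := hpos 2
    unfold Lset at h; omega
  obtain ⟨w', hm, hl⟩ := exists_move_to_lset w hns
  exact ⟨w', hm, lset_losing _ w' rfl hl⟩
end
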